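/- arXiv:2601.15364 — 2 statements merged into one kernel-verified Lean document; each statement's English description precedes it below -/
import Mathlib

section
/- For n ≥ 1, 0 ≤ c ≤ n-1, and k ≥ 2, the number of k-element subsets S of {0,1}^n such that the set of coordinates on which all elements of S agree has cardinality exactly c equals C(n,c) * 2^c * Σ_{m=0}^{n-c-1} (-1)^m * C(n-c, m) * 2^m * C(2^(n-c-m), k). -/
open Finset

/-- The set of coordinates on which all elements of `S` agree. -/
def constCoords (n : ℕ) (S : Finset (Fin n → Bool)) : Finset (Fin n) :=
  Finset.univ.filter (fun i => ∀ x ∈ S, ∀ y ∈ S, x i = y i)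

lemma cube_card (n : ℕ) (T : Finset (Fin n)) (v : Fin n → Bool) :
    (Finset.univ.filter (fun x : Fin n → Bool => ∀ i ∈ T, x i = v i)).card
      = 2 ^ (n - T.card) := by
  rw [← Fintype.card_subtype]
  have e : {x : Fin n → Bool // ∀ i ∈ T, x i = v i} ≃ ({i : Fin n // i ∉ T} → Bool) :=
    { toFun := fun x i => x.1 i.1
      invFun := fun f => ⟨fun i => if h : i ∈ T then v i else f ⟨i, h⟩,
        fun i hi => by simp [hi]⟩
      left_inv := fun x => by
        ext i
        by_cases h : i ∈ T <;> simp [h, x.2 i]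
      right_inv := fun f => by
        ext i
        simp [i.2] }
  rw [Fintype.card_congr e]
  simp [Fintype.card_subtype, Finset.filter_not, Finset.card_sdiff_of_subset (Finset.subset_univ T)]

lemma count_superset (n k : ℕ) (hk : 1 ≤ k) (T : Finset (Fin n)) :
    (Finset.univ.filter (fun S : Finset (Fin n → Bool) =>
        S.card = k ∧ T ⊆ constCoords n S)).card
      = 2 ^ T.card * (2 ^ (n - T.card)).choose k := by
  classical
  set cube : (Fin n → Bool) → Finset (Fin n → Bool) :=
    fun v => Finset.univ.filter (fun x => ∀ i ∈ T, x i = v i) with hcube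
  set V : Finset (Fin n → Bool) :=
    Finset.univ.filter (fun v => ∀ i ∉ T, v i = false) with hV
  have hset : Finset.univ.filter (fun S : Finset (Fin n → Bool) =>
        S.card = k ∧ T ⊆ constCoords n S)
      = V.biUnion (fun v => (cube v).powersetCard k) := by
    ext S
    simp only [Finset.mem_filter, Finset.mem_univ, true_and, Finset.mem_biUnion,
      Finset.mem_powersetCard, hV, hcube]
    constructor
    · rintro ⟨hcard, hsub⟩
      have hne : S.Nonempty := Finset.card_pos.mp (by omega)
      obtain ⟨x₀, hx₀⟩ := hne
      refine ⟨fun i => if i ∈ T then x₀ i else false, fun i hi => by simp [hi], ?_, hcard⟩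
      intro x hx
      simp only [Finset.mem_filter, Finset.mem_univ, true_and]
      intro i hi
      have := hsub hi
      simp only [constCoords, Finset.mem_filter, Finset.mem_univ, true_and] at this
      simp [hi, this x hx x₀ hx₀]
    · rintro ⟨v, hv, hSsub, hcard⟩
      refine ⟨hcard, fun i hi => ?_⟩
      simp only [constCoords, Finset.mem_filter, Finset.mem_univ, true_and]
      intro x hx y hy
      have hx' := hSsub hx; have hy' := hSsub hy
      simp only [Finset.mem_filter, Finset.mem_univ, true_and] at hx' hy'
      rw [hx' i hi, hy' i hi]
  rw [hset, Finset.card_biUnion]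
  · have hcc : ∀ v ∈ V, ((cube v).powersetCard k).card = (2 ^ (n - T.card)).choose k := by
      intro v _
      rw [Finset.card_powersetCard, cube_card]
    rw [Finset.sum_congr rfl hcc, Finset.sum_const, smul_eq_mul]
    congr 1
    have h1 : V = Finset.univ.filter
        (fun v : Fin n → Bool => ∀ i ∈ Tᶜ, v i = (fun _ => false) i) := by
      simp only [hV]
      apply Finset.filter_congr
      intro v _
      simp
    rw [h1, cube_card, Finset.card_compl, Fintype.card_fin]
    congr 1
    have : T.card ≤ n := by
      simpa using Finset.card_le_card (Finset.subset_univ T)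
    omega
  · intro v hv w hw hvw
    simp only [Finset.disjoint_left]
    intro S hS hS'
    simp only [Finset.mem_powersetCard, hcube] at hS hS'
    obtain ⟨hSv, hScard⟩ := hS
    obtain ⟨hSw, _⟩ := hS'
    have hne : S.Nonempty := Finset.card_pos.mp (by omega)
    obtain ⟨x, hx⟩ := hne
    apply hvw
    funext i
    have h1 := hSv hx; have h2 := hSw hx
    simp only [Finset.mem_filter, Finset.mem_univ, true_and] at h1 h2
    by_cases hi : i ∈ T
    · rw [← h1 i hi, ← h2 i hi]
    · simp only [Finset.mem_coe, hV, Finset.mem_filter, Finset.mem_univ, true_and] at hv hw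
      rw [hv i hi, hw i hi]

lemma double_count (n k t : ℕ) :
    ∑ S ∈ Finset.univ.filter (fun S : Finset (Fin n → Bool) => S.card = k),
        ((constCoords n S).card.choose t)
      = ∑ T ∈ Finset.powersetCard t (Finset.univ : Finset (Fin n)),
          (Finset.univ.filter (fun S : Finset (Fin n → Bool) =>
            S.card = k ∧ T ⊆ constCoords n S)).card := by
  classical
  have hrhs : ∀ T : Finset (Fin n),
      (Finset.univ.filter (fun S : Finset (Fin n → Bool) =>
        S.card = k ∧ T ⊆ constCoords n S)).card
      = ∑ S ∈ (Finset.univ : Finset (Finset (Fin n → Bool))),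
          (if S.card = k ∧ T ⊆ constCoords n S then 1 else 0) := by
    intro T
    rw [Finset.card_filter]
  simp only [hrhs]
  rw [Finset.sum_comm]
  rw [Finset.sum_filter]
  apply Finset.sum_congr rfl
  intro S _
  by_cases hS : S.card = k
  · simp only [hS, true_and, if_true]
    have : ∑ T ∈ Finset.powersetCard t (Finset.univ : Finset (Fin n)),
        (if T ⊆ constCoords n S then 1 else 0)
        = ((Finset.powersetCard t (Finset.univ : Finset (Fin n))).filter
            (fun T => T ⊆ constCoords n S)).card := by
      rw [Finset.card_filter]
    rw [this]
    have heq : (Finset.powersetCard t (Finset.univ : Finset (Fin n))).filter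
        (fun T => T ⊆ constCoords n S) = Finset.powersetCard t (constCoords n S) := by
      ext T
      simp only [Finset.mem_filter, Finset.mem_powersetCard]
      constructor
      · rintro ⟨⟨-, h2⟩, h3⟩; exact ⟨h3, h2⟩
      · rintro ⟨h1, h2⟩; exact ⟨⟨Finset.subset_univ T, h2⟩, h1⟩
    rw [heq, Finset.card_powersetCard]
  · simp [hS]

lemma key_identity (n k t : ℕ) (hk : 1 ≤ k) :
    ∑ j ∈ Finset.range (n + 1),
        (Finset.univ.filter (fun S : Finset (Fin n → Bool) =>
          S.card = k ∧ (constCoords n S).card = j)).card * j.choose t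
      = n.choose t * (2 ^ t * (2 ^ (n - t)).choose k) := by
  classical
  have h1 : ∑ S ∈ Finset.univ.filter (fun S : Finset (Fin n → Bool) => S.card = k),
      ((constCoords n S).card.choose t)
      = ∑ j ∈ Finset.range (n + 1),
        ∑ S ∈ (Finset.univ.filter (fun S : Finset (Fin n → Bool) => S.card = k)).filter
            (fun S => (constCoords n S).card = j),
          ((constCoords n S).card.choose t) := by
    rw [Finset.sum_fiberwise_of_maps_to]
    intro S _
    simp only [Finset.mem_range]
    have : (constCoords n S).card ≤ n := by
      simpa using Finset.card_le_card (Finset.subset_univ (constCoords n S))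
    omega
  have h2 : ∀ j, ∑ S ∈ (Finset.univ.filter
        (fun S : Finset (Fin n → Bool) => S.card = k)).filter
        (fun S => (constCoords n S).card = j),
        ((constCoords n S).card.choose t)
      = (Finset.univ.filter (fun S : Finset (Fin n → Bool) =>
          S.card = k ∧ (constCoords n S).card = j)).card * j.choose t := by
    intro j
    rw [Finset.filter_filter]
    rw [Finset.sum_congr rfl (fun S hS => by
      simp only [Finset.mem_filter] at hS
      rw [hS.2.2])]
    rw [Finset.sum_const, smul_eq_mul]
  rw [← Finset.sum_congr rfl (fun j _ => h2 j), ← h1, double_count n k t]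
  rw [Finset.sum_congr rfl (fun T hT => by
    rw [count_superset n k hk T,
      (Finset.mem_powersetCard.mp hT).2]), Finset.sum_const, smul_eq_mul]
  congr 1
  rw [Finset.card_powersetCard, Finset.card_univ, Fintype.card_fin]

lemma innerSumAux (n c j : ℕ) (hj : j ≤ n) :
    ∑ t ∈ Finset.range (n + 1),
        (-1 : ℤ) ^ (t - c) * (t.choose c) * (j.choose t)
      = if j = c then 1 else 0 := by
  by_cases hjc : j < c
  · rw [if_neg (by omega)]
    apply Finset.sum_eq_zero
    intro t _
    by_cases ht : t < c
    · rw [Nat.choose_eq_zero_of_lt ht]; ring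
    · rw [Nat.choose_eq_zero_of_lt (by omega : j < t)]; ring
  · push_neg at hjc
    have hsub : ∑ t ∈ Finset.range (n + 1),
        (-1 : ℤ) ^ (t - c) * (t.choose c) * (j.choose t)
        = ∑ t ∈ Finset.Ico c (j + 1),
            (-1 : ℤ) ^ (t - c) * (t.choose c) * (j.choose t) := by
      rw [Finset.range_eq_Ico]
      symm
      apply Finset.sum_subset
      · intro t ht
        simp only [Finset.mem_Ico] at *
        omega
      · intro t ht hnt
        simp only [Finset.mem_Ico] at ht hnt
        by_cases h : t < c
        · rw [Nat.choose_eq_zero_of_lt h]; ring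
        · rw [Nat.choose_eq_zero_of_lt (by omega : j < t)]; ring
    rw [hsub, Finset.sum_Ico_eq_sum_range]
    have hjc1 : j + 1 - c = (j - c) + 1 := by omega
    rw [hjc1]
    have hterm : ∀ s ∈ Finset.range ((j - c) + 1),
        (-1 : ℤ) ^ (c + s - c) * ((c + s).choose c) * (j.choose (c + s))
        = (j.choose c : ℤ) * ((-1 : ℤ) ^ s * ((j - c).choose s)) := by
      intro s hs
      simp only [Finset.mem_range] at hs
      have h1 : c + s ≤ j := by omega
      have h2 : c ≤ c + s := by omega
      have := Nat.choose_mul (n := j) h2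
      rw [Nat.add_sub_cancel_left] at this
      rw [Nat.add_sub_cancel_left]
      have : ((j.choose (c + s) : ℤ) * ((c + s).choose c : ℤ))
          = (j.choose c : ℤ) * ((j - c).choose s : ℤ) := by
        exact_mod_cast congrArg (Nat.cast : ℕ → ℤ) this
      linear_combination (-1 : ℤ) ^ s * this
    rw [Finset.sum_congr rfl hterm, ← Finset.mul_sum, Int.alternating_sum_range_choose]
    by_cases h : j = c
    · simp [h]
    · rw [if_neg (by omega), if_neg h, mul_zero]

/-- The number of `k`-element subsets of `{0,1}^n` with exactly `c` constant
coordinates equals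
`C(n,c)·2^c·Σ_{m=0}^{n-c-1} (-1)^m·C(n-c,m)·2^m·C(2^(n-c-m),k)`. -/
theorem card_CMBc_supports (n c k : ℕ) (hn : 1 ≤ n) (hc : c ≤ n - 1)
    (hk : 2 ≤ k) :
    ((Finset.univ.filter
        (fun S : Finset (Fin n → Bool) =>
          S.card = k ∧ (constCoords n S).card = c)).card : ℤ)
      = (n.choose c : ℤ) * 2 ^ c *
        ∑ m ∈ Finset.range (n - c),
          (-1 : ℤ) ^ m * ((n - c).choose m) * 2 ^ m *
            ((2 ^ (n - c - m)).choose k) := by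
  classical
  have hk1 : 1 ≤ k := by omega
  set A : ℕ → ℤ := fun j => ((Finset.univ.filter (fun S : Finset (Fin n → Bool) =>
          S.card = k ∧ (constCoords n S).card = j)).card : ℤ) with hA
  -- Step A: inversion
  have stepA : A c = ∑ t ∈ Finset.range (n + 1),
      (-1 : ℤ) ^ (t - c) * (t.choose c) *
        ((n.choose t : ℤ) * (2 ^ t * ((2 ^ (n - t)).choose k : ℤ))) := by
    have hkey : ∀ t, ∑ j ∈ Finset.range (n + 1), A j * (j.choose t : ℤ)
        = (n.choose t : ℤ) * (2 ^ t * ((2 ^ (n - t)).choose k : ℤ)) := by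
      intro t
      have := key_identity n k t hk1
      have := congrArg (Nat.cast : ℕ → ℤ) this
      push_cast at this
      rw [← this]
    calc A c
        = ∑ j ∈ Finset.range (n + 1),
            A j * (if j = c then (1 : ℤ) else 0) := by
          rw [Finset.sum_congr rfl (fun j _ => mul_ite (j = c) (A j) 1 0)]
          simp only [mul_one, mul_zero]
          rw [Finset.sum_ite_eq' (Finset.range (n + 1)) c A,
            if_pos (Finset.mem_range.mpr (by omega))]
      _ = ∑ j ∈ Finset.range (n + 1), A j *
            (∑ t ∈ Finset.range (n + 1),
              (-1 : ℤ) ^ (t - c) * (t.choose c) * (j.choose t)) := by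
          apply Finset.sum_congr rfl
          intro j hj
          rw [innerSumAux n c j (by simp only [Finset.mem_range] at hj; omega)]
      _ = ∑ t ∈ Finset.range (n + 1),
            (-1 : ℤ) ^ (t - c) * (t.choose c) *
              (∑ j ∈ Finset.range (n + 1), A j * (j.choose t : ℤ)) := by
          simp_rw [Finset.mul_sum]
          rw [Finset.sum_comm]
          apply Finset.sum_congr rfl
          intro t _
          apply Finset.sum_congr rfl
          intro j _
          ring
      _ = _ := by
          apply Finset.sum_congr rfl
          intro t _
          rw [hkey t]
  -- Step B: reindex
  have hcn : c ≤ n - 1 := hc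
  have hcn' : c ≤ n := by omega
  simp only [hA] at stepA
  rw [stepA]
  have hsub : ∑ t ∈ Finset.range (n + 1),
      (-1 : ℤ) ^ (t - c) * (t.choose c) *
        ((n.choose t : ℤ) * (2 ^ t * ((2 ^ (n - t)).choose k : ℤ)))
      = ∑ t ∈ Finset.Ico c (n + 1),
          (-1 : ℤ) ^ (t - c) * (t.choose c) *
            ((n.choose t : ℤ) * (2 ^ t * ((2 ^ (n - t)).choose k : ℤ))) := by
    rw [Finset.range_eq_Ico]
    symm
    apply Finset.sum_subset
    · intro t ht; simp only [Finset.mem_Ico] at *; omega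
    · intro t ht hnt
      simp only [Finset.mem_Ico] at ht hnt
      rw [Nat.choose_eq_zero_of_lt (by omega : t < c)]
      push_cast; ring
  rw [hsub, Finset.sum_Ico_eq_sum_range]
  have h1 : n + 1 - c = (n - c) + 1 := by omega
  rw [h1]
  have hterm : ∀ m ∈ Finset.range ((n - c) + 1),
      (-1 : ℤ) ^ (c + m - c) * ((c + m).choose c) *
          ((n.choose (c + m) : ℤ) * (2 ^ (c + m) * ((2 ^ (n - (c + m))).choose k : ℤ)))
      = (n.choose c : ℤ) * 2 ^ c *
          ((-1 : ℤ) ^ m * ((n - c).choose m) * 2 ^ m * ((2 ^ (n - c - m)).choose k)) := by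
    intro m hm
    simp only [Finset.mem_range] at hm
    have h2 : c + m ≤ n := by omega
    have h3 : c ≤ c + m := by omega
    have h4 := Nat.choose_mul (n := n) h3
    rw [Nat.add_sub_cancel_left] at h4
    have h4' : ((n.choose (c + m) : ℤ) * ((c + m).choose c : ℤ))
        = (n.choose c : ℤ) * ((n - c).choose m : ℤ) := by
      exact_mod_cast congrArg (Nat.cast : ℕ → ℤ) h4
    have h5 : n - (c + m) = n - c - m := by omega
    rw [Nat.add_sub_cancel_left, h5, pow_add]
    linear_combination ((-1 : ℤ) ^ m * 2 ^ c * 2 ^ m * ((2 ^ (n - c - m)).choose k : ℤ)) * h4'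
  rw [Finset.sum_congr rfl hterm, ← Finset.mul_sum]
  congr 1
  rw [Finset.sum_range_succ]
  have hz : ((2 : ℕ) ^ (n - c - (n - c))).choose k = 0 := by
    rw [Nat.sub_self, pow_zero]
    exact Nat.choose_eq_zero_of_lt (by omega)
  rw [hz]
  push_cast
  ring
end

section
/- Summing the CMB_c support counts over all c from 0 to n-1 and all k from 2 to 2^n, plus the 2^n singletons, recovers the total count of nonempty supports: Σ_{c=0}^{n-1} Σ_{k=2}^{2^n} C(n,c)·2^c·Σ_{m=0}^{n-c-1} (-1)^m·C(n-c,m)·2^m·C(2^(n-c-m),k) + 2^n = 2^(2^n) - 1. -/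
open Finset

/-- Sum of binomial coefficients over `k ∈ [2, M]` for `N ≤ M`. -/
lemma sum_Icc_choose_int (M N : ℕ) (hNM : N ≤ M) (hM : 2 ≤ M) :
    (∑ k ∈ Finset.Icc 2 M, (N.choose k : ℤ)) = 2 ^ N - 1 - N := by
  have h1 : (∑ k ∈ Finset.range (M + 1), (N.choose k : ℤ)) = 2 ^ N := by
    have : (∑ k ∈ Finset.range (M + 1), N.choose k) = 2 ^ N := by
      rw [← Finset.sum_subset (Finset.range_subset_range.2 (by omega : N + 1 ≤ M + 1))
        (fun x hx hx' => Nat.choose_eq_zero_of_lt (by simp at hx' ⊢; omega))]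
      exact Nat.sum_range_choose N
    exact_mod_cast congrArg (Nat.cast : ℕ → ℤ) this
  have h2 : Finset.range (M + 1) = insert 0 (insert 1 (Finset.Icc 2 M)) := by
    ext x; simp [Finset.mem_Icc]; omega
  rw [h2] at h1
  rw [Finset.sum_insert (by simp), Finset.sum_insert (by simp)] at h1
  simp [Nat.choose_one_right] at h1
  linarith

/-- Triangle reindexing. -/
lemma triangle_sum (N : ℕ) (g : ℕ → ℕ → ℤ) :
    ∑ c ∈ Finset.range (N + 1), ∑ m ∈ Finset.range (N + 1 - c), g c m
      = ∑ s ∈ Finset.range (N + 1), ∑ m ∈ Finset.range (s + 1), g (s - m) m := by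
  rw [Finset.sum_sigma', Finset.sum_sigma']
  apply Finset.sum_nbij' (fun p => (⟨p.1 + p.2, p.2⟩ : Σ _ : ℕ, ℕ))
    (fun p => (⟨p.1 - p.2, p.2⟩ : Σ _ : ℕ, ℕ))
  · intro p hp; simp [Finset.mem_sigma] at hp ⊢; omega
  · intro p hp; simp [Finset.mem_sigma] at hp ⊢; omega
  · intro p hp; simp [Finset.mem_sigma] at hp; ext <;> simp <;> omega
  · intro p hp; simp [Finset.mem_sigma] at hp; ext <;> simp <;> omega
  · intro p hp; simp [Finset.mem_sigma] at hp; simp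

/-- Binomial inversion with weight 2. -/
lemma binomial_inversion (H : ℕ → ℤ) (N : ℕ) :
    ∑ c ∈ Finset.range (N + 1), (N.choose c : ℤ) * 2 ^ c *
      ∑ m ∈ Finset.range (N - c + 1),
        (-1 : ℤ) ^ m * ((N - c).choose m) * 2 ^ m * H (N - c - m) = H N := by
  have key : ∑ c ∈ Finset.range (N + 1), ∑ m ∈ Finset.range (N + 1 - c),
      ((N.choose c : ℤ) * 2 ^ c * ((-1 : ℤ) ^ m * ((N - c).choose m) * 2 ^ m * H (N - c - m)))
      = H N := by
    rw [triangle_sum]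
    have hinner : ∀ s ∈ Finset.range (N + 1),
        (∑ m ∈ Finset.range (s + 1),
          ((N.choose (s - m) : ℤ) * 2 ^ (s - m) *
            ((-1 : ℤ) ^ m * ((N - (s - m)).choose m) * 2 ^ m * H (N - (s - m) - m))))
        = (N.choose s : ℤ) * 2 ^ s * H (N - s) *
            (∑ m ∈ Finset.range (s + 1), (-1 : ℤ) ^ m * (s.choose m)) := by
      intro s hs
      simp only [Finset.mem_range] at hs
      rw [Finset.mul_sum]
      apply Finset.sum_congr rfl
      intro m hm
      simp only [Finset.mem_range] at hm
      have hms : m ≤ s := by omega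
      have hsN : s ≤ N := by omega
      have e1 : N - (s - m) - m = N - s := by omega
      have e2 : (N.choose (s - m) : ℤ) * ((N - (s - m)).choose m)
          = (N.choose s : ℤ) * (s.choose m) := by
        have := Nat.choose_mul (n := N) (k := s) (s := s - m) (by omega)
        rw [Nat.choose_symm hms] at this
        have e3 : s - (s - m) = m := by omega
        rw [e3] at this
        exact_mod_cast congrArg (Nat.cast : ℕ → ℤ) this.symm
      have e4 : (2 : ℤ) ^ (s - m) * 2 ^ m = 2 ^ s := by
        rw [← pow_add]; congr 1; omega
      rw [e1]
      linear_combination ((-1:ℤ) ^ m * H (N - s) * (2 ^ (s - m) * 2 ^ m)) * e2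
        + ((-1:ℤ) ^ m * H (N - s) * ((N.choose s : ℤ) * (s.choose m))) * e4
    rw [Finset.sum_congr rfl hinner]
    have halt : ∀ s ∈ Finset.range (N + 1),
        (N.choose s : ℤ) * 2 ^ s * H (N - s) *
          (∑ m ∈ Finset.range (s + 1), (-1 : ℤ) ^ m * (s.choose m))
        = if s = 0 then H N else 0 := by
      intro s _
      rw [Int.alternating_sum_range_choose]
      by_cases h : s = 0 <;> simp [h]
    rw [Finset.sum_congr rfl halt]
    simp
  rw [← key]
  apply Finset.sum_congr rfl (fun c hc => ?_)
  simp only [Finset.mem_range] at hc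
  rw [Finset.mul_sum]
  apply Finset.sum_congr (by congr 1; omega) (fun m _ => rfl)

/-- Summing the CMB_c support counts over all `c` and all support sizes
`k ≥ 2`, plus the `2^n` singletons, recovers the total number `2^(2^n) - 1`
of nonempty supports. -/
theorem cmb_counts_sum_to_total (n : ℕ) (hn : 1 ≤ n) :
    (∑ c ∈ Finset.range n, ∑ k ∈ Finset.Icc 2 (2 ^ n),
        (n.choose c : ℤ) * 2 ^ c *
          ∑ m ∈ Finset.range (n - c),
            (-1 : ℤ) ^ m * ((n - c).choose m) * 2 ^ m *
              ((2 ^ (n - c - m)).choose k))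
      + 2 ^ n = 2 ^ (2 ^ n) - 1 := by
  have hH : ∀ j : ℕ, (fun j : ℕ => (2 : ℤ) ^ (2 ^ j) - 1 - 2 ^ j) j
      = 2 ^ (2 ^ j) - 1 - 2 ^ j := fun _ => rfl
  set H : ℕ → ℤ := fun j : ℕ => (2 : ℤ) ^ (2 ^ j) - 1 - 2 ^ j with hHdef
  have hH0 : H 0 = 0 := by simp [hHdef]
  have step1 : ∀ c ∈ Finset.range n,
      (∑ k ∈ Finset.Icc 2 (2 ^ n),
        (n.choose c : ℤ) * 2 ^ c *
          ∑ m ∈ Finset.range (n - c),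
            (-1 : ℤ) ^ m * ((n - c).choose m) * 2 ^ m *
              ((2 ^ (n - c - m)).choose k))
      = (n.choose c : ℤ) * 2 ^ c *
          ∑ m ∈ Finset.range (n - c),
            (-1 : ℤ) ^ m * ((n - c).choose m) * 2 ^ m * H (n - c - m) := by
    intro c _
    rw [← Finset.mul_sum]
    congr 1
    rw [Finset.sum_comm]
    apply Finset.sum_congr rfl
    intro m _
    rw [← Finset.mul_sum,
      sum_Icc_choose_int (2 ^ n) (2 ^ (n - c - m))
        (Nat.pow_le_pow_right (by norm_num) (by omega))
        (by calc (2:ℕ) = 2 ^ 1 := rfl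
              _ ≤ 2 ^ n := Nat.pow_le_pow_right (by norm_num) hn)]
    rw [hH]
    push_cast
    ring
  rw [Finset.sum_congr rfl step1]
  have ext : (∑ c ∈ Finset.range n, (n.choose c : ℤ) * 2 ^ c *
        ∑ m ∈ Finset.range (n - c),
          (-1 : ℤ) ^ m * ((n - c).choose m) * 2 ^ m * H (n - c - m))
      = ∑ c ∈ Finset.range (n + 1), (n.choose c : ℤ) * 2 ^ c *
        ∑ m ∈ Finset.range (n - c + 1),
          (-1 : ℤ) ^ m * ((n - c).choose m) * 2 ^ m * H (n - c - m) := by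
    rw [Finset.sum_range_succ]
    have hlast : (n.choose n : ℤ) * 2 ^ n *
        ∑ m ∈ Finset.range (n - n + 1),
          (-1 : ℤ) ^ m * ((n - n).choose m) * 2 ^ m * H (n - n - m) = 0 := by
      simp [Nat.sub_self, hH0]
    rw [hlast, add_zero]
    apply Finset.sum_congr rfl
    intro c _
    congr 1
    rw [Finset.sum_range_succ]
    have hz : (-1 : ℤ) ^ (n - c) * (((n - c).choose (n - c) : ℕ) : ℤ) * 2 ^ (n - c) *
        H (n - c - (n - c)) = 0 := by
      simp [Nat.sub_self, hH0]
    rw [hz, add_zero]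
  rw [ext, binomial_inversion H n, hH]
  ring
end
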